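/- Let Q be a selective complete idempotent dioid, Σ and Σ# finite sets, and let A ∈ Q^{Σ#×Σ}, M ∈ Q^{Σ×Σ}, M# ∈ Q^{Σ#×Σ#} with all entries of A equal to ⊥ or e, such that (M, M#, A) is a correct linear abstraction (A M ≤ M# A entrywise). Then for every σ ∈ Σ and k ≥ 1 with (M^k)_{σ,σ} ≠ ⊥, and for every σ#_i ∈ Σ# with A_{σ#_i,σ} = e, there exists σ#_j ∈ Σ# with A_{σ#_j,σ} = e such that ((M#)^k)_{σ#_i,σ#_j} ≥ (M^k)_{σ,σ}. -/

import Mathlib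

/-!
Over an idempotent semiring ordered canonically, matrix products are monotone, so the
correctness condition `A M ≤ M# A` propagates to `A Mᵏ ≤ (M#)ᵏ A`. Since `A i σ = e`, the
entry `(Mᵏ) σ σ` is one summand of `(A Mᵏ) i σ`, hence bounded by
`((M#)ᵏ A) i σ = ⨁ⱼ ((M#)ᵏ) i j ⊗ A j σ`. Selectivity makes this sum equal to one of its
terms; that term cannot have `A j σ = ⊥`, since then `(Mᵏ) σ σ = ⊥`.
-/

open Matrix

theorem CanonicallyOrderedAdd.of_le_iff_add_eq {Q : Type*} [AddCommSemigroup Q] [Preorder Q]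
    (hle : ∀ a b : Q, a ≤ b ↔ a + b = b) : CanonicallyOrderedAdd Q := by
  have hidem (a : Q) : a + a = a := (hle a a).1 le_rfl
  refine
    { exists_add_of_le := fun {a b} h => ⟨b, ((hle a b).1 h).symm⟩
      le_add_self := fun a b => (hle _ _).2 ?_
      le_self_add := fun a b => (hle _ _).2 ?_ }
  · rw [add_left_comm, hidem]
  · rw [← add_assoc, hidem]

theorem Finset.Nonempty.exists_mem_sum_eq_of_selective {ι R : Type*} [AddCommMonoid R]
    (hsel : ∀ a b : R, a + b = a ∨ a + b = b) {s : Finset ι} (hs : s.Nonempty) (f : ι → R) :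
    ∃ j ∈ s, ∑ x ∈ s, f x = f j := by
  induction hs using Finset.Nonempty.cons_induction with
  | singleton a => exact ⟨a, mem_singleton_self a, sum_singleton f a⟩
  | cons a s ha hs ih =>
    obtain ⟨j, hj, hsum⟩ := ih
    rw [sum_cons, hsum]
    rcases hsel (f a) (f j) with h | h
    · exact ⟨a, mem_cons_self a s, h⟩
    · exact ⟨j, mem_cons_of_mem hj, h⟩

namespace Matrix

variable {l m n R : Type*} [Fintype m] [CommSemiring R] [PartialOrder R] [CanonicallyOrderedAdd R]

theorem mul_apply_le_mul_apply_of_le_left {X Y : Matrix l m R} (h : ∀ i j, X i j ≤ Y i j)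
    (C : Matrix m n R) (i : l) (k : n) : (X * C) i k ≤ (Y * C) i k :=
  have := CanonicallyOrderedAdd.toIsOrderedRing (R := R)
  Finset.sum_le_sum fun j _ => mul_le_mul_left (h i j) _

theorem mul_apply_le_mul_apply_of_le_right {X Y : Matrix m n R} (h : ∀ i j, X i j ≤ Y i j)
    (C : Matrix l m R) (i : l) (k : n) : (C * X) i k ≤ (C * Y) i k :=
  have := CanonicallyOrderedAdd.toIsOrderedRing (R := R)
  Finset.sum_le_sum fun j _ => mul_le_mul_right (h j k) _

theorem mul_pow_apply_le_pow_mul_apply [DecidableEq m] [Fintype l] [DecidableEq l]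
    {A : Matrix l m R} {M : Matrix m m R} {M' : Matrix l l R}
    (hAM : ∀ a σ, (A * M) a σ ≤ (M' * A) a σ) (k : ℕ) (a : l) (σ : m) :
    (A * M ^ k) a σ ≤ (M' ^ k * A) a σ := by
  induction k generalizing a σ with
  | zero => simp
  | succ k ih =>
    calc (A * M ^ (k + 1)) a σ = (A * M ^ k * M) a σ := by rw [pow_succ, Matrix.mul_assoc]
      _ ≤ (M' ^ k * A * M) a σ := mul_apply_le_mul_apply_of_le_left ih M a σ
      _ = (M' ^ k * (A * M)) a σ := by rw [Matrix.mul_assoc]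
      _ ≤ (M' ^ k * (M' * A)) a σ := mul_apply_le_mul_apply_of_le_right hAM _ a σ
      _ = (M' ^ (k + 1) * A) a σ := by rw [pow_succ, Matrix.mul_assoc]

end Matrix

theorem stmt_13_general {Q : Type*} [CommSemiring Q] [CompleteLattice Q]
    (hle : ∀ a b : Q, a ≤ b ↔ a + b = b)
    (hsel : ∀ a b : Q, a + b = a ∨ a + b = b)
    {S S' : Type*} [Fintype S] [DecidableEq S] [Fintype S'] [DecidableEq S']
    (A : Matrix S' S Q) (M : Matrix S S Q) (M' : Matrix S' S' Q)
    (hA : ∀ (a : S') (σ : S), A a σ = ⊥ ∨ A a σ = 1)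
    (hcorrect : ∀ (a : S') (σ : S), (A * M) a σ ≤ (M' * A) a σ)
    (σ : S) (k : ℕ) (hM : (M ^ k) σ σ ≠ ⊥)
    (i : S') (hi : A i σ = 1) :
    ∃ j : S', A j σ = 1 ∧ (M ^ k) σ σ ≤ (M' ^ k) i j := by
  have := CanonicallyOrderedAdd.of_le_iff_add_eq hle
  have hbot : (⊥ : Q) = 0 := (bot_unique zero_le).symm
  have hdiag : (M ^ k) σ σ ≤ (A * M ^ k) i σ := by
    simpa [mul_apply, hi] using
      Finset.single_le_sum (fun τ _ => zero_le) (Finset.mem_univ σ)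
        (f := fun τ => A i τ * (M ^ k) τ σ)
  obtain ⟨j, -, hj⟩ := Finset.Nonempty.exists_mem_sum_eq_of_selective hsel
    ⟨i, Finset.mem_univ i⟩ fun j => (M' ^ k) i j * A j σ
  have hbound : (M ^ k) σ σ ≤ (M' ^ k) i j * A j σ := by
    rw [← hj, ← mul_apply]
    exact hdiag.trans (mul_pow_apply_le_pow_mul_apply hcorrect k i σ)
  rcases hA j σ with hj | hj
  · rw [hj, hbot, mul_zero, ← hbot, le_bot_iff] at hbound
    exact absurd hbound hM
  · exact ⟨j, hj, by rwa [hj, mul_one] at hbound⟩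

/-- Let `Q` be a selective complete idempotent dioid and `(M, M#, A)` a
correct linear abstraction with `A` a `⊥`/`e` matrix. Then for every `σ` and `k ≥ 1` with
`(M^k) σ σ ≠ ⊥`, and every abstract state `σ#ᵢ` with `A σ#ᵢ σ = e`, there is an abstract
state `σ#ⱼ` with `A σ#ⱼ σ = e` such that `((M#)^k) σ#ᵢ σ#ⱼ ≥ (M^k) σ σ`. -/
theorem stmt_13 {Q : Type*} [CommSemiring Q] [CompleteLattice Q]
    (hidem : ∀ a : Q, a + a = a)
    (hle : ∀ a b : Q, a ≤ b ↔ a + b = b)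
    (hsup : ∀ a b : Q, a ⊔ b = a + b)
    (hbot : (⊥ : Q) = 0)
    (hdistrib : ∀ (a : Q) (X : Set Q), a * sSup X = ⨆ x ∈ X, a * x)
    (hsel : ∀ a b : Q, a + b = a ∨ a + b = b)
    {S S' : Type*} [Fintype S] [DecidableEq S] [Fintype S'] [DecidableEq S']
    (A : Matrix S' S Q) (M : Matrix S S Q) (M' : Matrix S' S' Q)
    (hA : ∀ (a : S') (σ : S), A a σ = ⊥ ∨ A a σ = 1)
    (hcorrect : ∀ (a : S') (σ : S), (A * M) a σ ≤ (M' * A) a σ)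
    (σ : S) (k : ℕ) (hk : 1 ≤ k) (hM : (M ^ k) σ σ ≠ ⊥)
    (i : S') (hi : A i σ = 1) :
    ∃ j : S', A j σ = 1 ∧ (M ^ k) σ σ ≤ (M' ^ k) i j :=
  stmt_13_general hle hsel A M M' hA hcorrect σ k hM i hi
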